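/- Let G₁, G₂ be disjoint graphs with u ∈ V(G₁), v ∈ V(G₂), and let G be obtained by identifying u and v into a vertex w. If D₁ and D₂ are strong dominating sets of G₁ and G₂ respectively, then (D₁ \ {u}) ∪ (D₂ \ {v}) ∪ {w} is a strong dominating set of G; consequently γ_st(G) ≤ γ_st(G₁) + γ_st(G₂) + 1. -/

import Mathlib

open SimpleGraph

/-- The degree of a vertex `v` in the graph `G`. -/
noncomputable def deg {V : Type*} (G : SimpleGraph V) (v : V) : ℕ :=
  (G.neighborSet v).ncard

/-- `D` is a strong dominating set of `G`: every vertex outside `D` has a neighbor in `D`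
of at least its own degree. -/
def IsSDS {V : Type*} (G : SimpleGraph V) (D : Set V) : Prop :=
  ∀ x ∉ D, ∃ y ∈ D, G.Adj x y ∧ deg G x ≤ deg G y

/-- The strong domination number of `G`. -/
noncomputable def gammaSt {V : Type*} (G : SimpleGraph V) : ℕ :=
  sInf {n | ∃ D : Set V, IsSDS G D ∧ D.ncard = n}

/-- The vertex gluing of `G₁` and `G₂`, identifying `u ∈ V₁` with `v ∈ V₂` into the single
vertex `none`. -/
def glueV {V₁ V₂ : Type*} (G₁ : SimpleGraph V₁) (G₂ : SimpleGraph V₂) (u : V₁) (v : V₂) :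
    SimpleGraph (Option ({x : V₁ // x ≠ u} ⊕ {y : V₂ // y ≠ v})) :=
  SimpleGraph.fromRel (fun a b =>
    match a, b with
    | some (.inl a), some (.inl b) => G₁.Adj a.1 b.1
    | some (.inr a), some (.inr b) => G₂.Adj a.1 b.1
    | none, some (.inl b) => G₁.Adj u b.1
    | none, some (.inr b) => G₂.Adj v b.1
    | _, _ => False)

/-!
Each `Gᵢ` embeds into the gluing, the cut vertex going to the glued vertex `w = none`. Away from
`w` the embedding preserves degrees, because a vertex of `V₁ ∖ {u}` has all its neighbours in the
copy of `G₁`; and `w` has at least the degree of `u` and of `v`. Hence a vertex outside the glued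
set is still dominated by the image of its dominator in `Dᵢ`, which is `w` if that dominator was
the cut vertex. Applying this to minimum strong dominating sets gives the bound on `γ_st`.
-/

namespace SimpleGraph.Embedding

variable {V W : Type*} {G : SimpleGraph V} {H : SimpleGraph W}

lemma deg_le_deg_apply [Finite W] (f : G ↪g H) (a : V) : deg G a ≤ deg H (f a) := by
  rw [deg, deg, ← Set.ncard_image_of_injective _ f.injective]
  exact Set.ncard_le_ncard (f.toHom.image_neighborSet_subset a)

lemma deg_apply_of_neighborSet_subset_range (f : G ↪g H) {a : V}
    (h : H.neighborSet (f a) ⊆ Set.range f) : deg H (f a) = deg G a := by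
  rw [deg, deg, ← f.preimage_neighborSet, ← Set.ncard_image_of_injective _ f.injective,
    Set.image_preimage_eq_of_subset h]

end SimpleGraph.Embedding

lemma IsSDS.exists_adj_image_of_deg_apply_le {V W : Type*} [Finite W] {G : SimpleGraph V}
    {H : SimpleGraph W} {D : Set V} (hD : IsSDS G D) (f : G ↪g H) {a : V} (ha : a ∉ D)
    (hdeg : deg H (f a) ≤ deg G a) : ∃ y ∈ f '' D, H.Adj (f a) y ∧ deg H (f a) ≤ deg H y := by
  obtain ⟨y, hyD, hay, hle⟩ := hD a ha
  exact ⟨f y, Set.mem_image_of_mem f hyD, f.map_adj_iff.2 hay,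
    hdeg.trans (hle.trans (f.deg_le_deg_apply y))⟩

section Glue

variable {V₁ V₂ : Type*} (G₁ : SimpleGraph V₁) (G₂ : SimpleGraph V₂) (u : V₁) (v : V₂)

open Classical in
noncomputable def glueVInl : G₁ ↪g glueV G₁ G₂ u v where
  toFun x := if h : x = u then none else some (.inl ⟨x, h⟩)
  inj' x y := by
    by_cases hx : x = u <;> by_cases hy : y = u <;> simp [hx, hy]
  map_rel_iff' {x y} := by
    by_cases hx : x = u <;> by_cases hy : y = u <;> simp [hx, hy, glueV] <;>
      grind [SimpleGraph.adj_comm, SimpleGraph.Adj.ne]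

open Classical in
noncomputable def glueVInr : G₂ ↪g glueV G₁ G₂ u v where
  toFun y := if h : y = v then none else some (.inr ⟨y, h⟩)
  inj' x y := by
    by_cases hx : x = v <;> by_cases hy : y = v <;> simp [hx, hy]
  map_rel_iff' {x y} := by
    by_cases hx : x = v <;> by_cases hy : y = v <;> simp [hx, hy, glueV] <;>
      grind [SimpleGraph.adj_comm, SimpleGraph.Adj.ne]

variable {G₁ G₂ u v}

lemma glueVInl_self : glueVInl G₁ G₂ u v u = none :=
  dif_pos rfl

lemma glueVInl_of_ne {a : V₁} (ha : a ≠ u) : glueVInl G₁ G₂ u v a = some (.inl ⟨a, ha⟩) :=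
  dif_neg ha

lemma glueVInr_self : glueVInr G₁ G₂ u v v = none :=
  dif_pos rfl

lemma glueVInr_of_ne {b : V₂} (hb : b ≠ v) : glueVInr G₁ G₂ u v b = some (.inr ⟨b, hb⟩) :=
  dif_neg hb

lemma neighborSet_glueVInl_subset_range {a : V₁} (ha : a ≠ u) :
    (glueV G₁ G₂ u v).neighborSet (glueVInl G₁ G₂ u v a) ⊆ Set.range (glueVInl G₁ G₂ u v) := by
  rintro (_ | b | b) hb
  · exact ⟨u, glueVInl_self⟩
  · exact ⟨b, glueVInl_of_ne b.2⟩
  · rw [glueVInl_of_ne ha] at hb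
    simp [glueV] at hb

lemma neighborSet_glueVInr_subset_range {b : V₂} (hb : b ≠ v) :
    (glueV G₁ G₂ u v).neighborSet (glueVInr G₁ G₂ u v b) ⊆ Set.range (glueVInr G₁ G₂ u v) := by
  rintro (_ | a | a) ha
  · exact ⟨v, glueVInr_self⟩
  · rw [glueVInr_of_ne hb] at ha
    simp [glueV] at ha
  · exact ⟨a, glueVInr_of_ne a.2⟩

lemma isSDS_glueV [Finite V₁] [Finite V₂] {D₁ : Set V₁} {D₂ : Set V₂} (h₁ : IsSDS G₁ D₁)
    (h₂ : IsSDS G₂ D₂) :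
    IsSDS (glueV G₁ G₂ u v)
      (insert none (glueVInl G₁ G₂ u v '' D₁ ∪ glueVInr G₁ G₂ u v '' D₂)) := by
  rintro (_ | ⟨a, ha⟩ | ⟨b, hb⟩) hx
  · exact absurd (Set.mem_insert _ _) hx
  · rw [← glueVInl_of_ne ha] at hx ⊢
    have haD : a ∉ D₁ := fun h => hx (Or.inr (Or.inl (Set.mem_image_of_mem _ h)))
    obtain ⟨y, hy, hadj, hle⟩ := h₁.exists_adj_image_of_deg_apply_le _ haD
      ((glueVInl G₁ G₂ u v).deg_apply_of_neighborSet_subset_range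
        (neighborSet_glueVInl_subset_range ha)).le
    exact ⟨y, Or.inr (Or.inl hy), hadj, hle⟩
  · rw [← glueVInr_of_ne hb] at hx ⊢
    have hbD : b ∉ D₂ := fun h => hx (Or.inr (Or.inr (Set.mem_image_of_mem _ h)))
    obtain ⟨y, hy, hadj, hle⟩ := h₂.exists_adj_image_of_deg_apply_le _ hbD
      ((glueVInr G₁ G₂ u v).deg_apply_of_neighborSet_subset_range
        (neighborSet_glueVInr_subset_range hb)).le
    exact ⟨y, Or.inr (Or.inr hy), hadj, hle⟩

lemma setOf_glued_eq_insert_none (D₁ : Set V₁) (D₂ : Set V₂) :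
    {z | z = none ∨ (∃ a, ∃ h : a ≠ u, a ∈ D₁ ∧ z = some (.inl ⟨a, h⟩)) ∨
        (∃ b, ∃ h : b ≠ v, b ∈ D₂ ∧ z = some (.inr ⟨b, h⟩))} =
      insert none (glueVInl G₁ G₂ u v '' D₁ ∪ glueVInr G₁ G₂ u v '' D₂) := by
  ext z
  constructor
  · rintro (rfl | ⟨a, ha, hD, rfl⟩ | ⟨b, hb, hD, rfl⟩)
    · exact Set.mem_insert _ _
    · exact Or.inr (Or.inl ⟨a, hD, glueVInl_of_ne ha⟩)
    · exact Or.inr (Or.inr ⟨b, hD, glueVInr_of_ne hb⟩)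
  · rintro (rfl | ⟨a, hD, rfl⟩ | ⟨b, hD, rfl⟩)
    · exact Or.inl rfl
    · by_cases ha : a = u
      · exact Or.inl (ha ▸ glueVInl_self)
      · exact Or.inr (Or.inl ⟨a, ha, hD, glueVInl_of_ne ha⟩)
    · by_cases hb : b = v
      · exact Or.inl (hb ▸ glueVInr_self)
      · exact Or.inr (Or.inr ⟨b, hb, hD, glueVInr_of_ne hb⟩)

end Glue

lemma isSDS_univ {V : Type*} (G : SimpleGraph V) : IsSDS G Set.univ :=
  fun x hx => absurd (Set.mem_univ x) hx

lemma gammaSt_le_ncard {V : Type*} {G : SimpleGraph V} {D : Set V} (hD : IsSDS G D) :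
    gammaSt G ≤ D.ncard :=
  Nat.sInf_le ⟨D, hD, rfl⟩

lemma exists_isSDS_ncard_eq_gammaSt {V : Type*} (G : SimpleGraph V) :
    ∃ D, IsSDS G D ∧ D.ncard = gammaSt G :=
  Nat.sInf_mem (s := {n | ∃ D : Set V, IsSDS G D ∧ D.ncard = n})
    ⟨_, Set.univ, isSDS_univ G, rfl⟩

/-- If `D₁`, `D₂` are strong dominating sets of `G₁`, `G₂`, then
`(D₁ \ {u}) ∪ (D₂ \ {v}) ∪ {w}` (where `w = none` is the glued vertex) is a strong
dominating set of the vertex gluing; consequently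
`γ_st(G) ≤ γ_st(G₁) + γ_st(G₂) + 1`. -/
theorem stmt_16 {V₁ V₂ : Type*} [Fintype V₁] [Fintype V₂]
    (G₁ : SimpleGraph V₁) (G₂ : SimpleGraph V₂) (u : V₁) (v : V₂)
    (D₁ : Set V₁) (D₂ : Set V₂) (h₁ : IsSDS G₁ D₁) (h₂ : IsSDS G₂ D₂) :
    IsSDS (glueV G₁ G₂ u v)
      {z | z = none ∨ (∃ a, ∃ h : a ≠ u, a ∈ D₁ ∧ z = some (.inl ⟨a, h⟩)) ∨
        (∃ b, ∃ h : b ≠ v, b ∈ D₂ ∧ z = some (.inr ⟨b, h⟩))} ∧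
    gammaSt (glueV G₁ G₂ u v) ≤ gammaSt G₁ + gammaSt G₂ + 1 := by
  rw [setOf_glued_eq_insert_none]
  refine ⟨isSDS_glueV h₁ h₂, ?_⟩
  obtain ⟨E₁, hE₁, hc₁⟩ := exists_isSDS_ncard_eq_gammaSt G₁
  obtain ⟨E₂, hE₂, hc₂⟩ := exists_isSDS_ncard_eq_gammaSt G₂
  calc gammaSt (glueV G₁ G₂ u v)
      ≤ (insert none (glueVInl G₁ G₂ u v '' E₁ ∪ glueVInr G₁ G₂ u v '' E₂)).ncard :=
        gammaSt_le_ncard (isSDS_glueV hE₁ hE₂)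
    _ ≤ (glueVInl G₁ G₂ u v '' E₁ ∪ glueVInr G₁ G₂ u v '' E₂).ncard + 1 :=
        Set.ncard_insert_le _ _
    _ ≤ E₁.ncard + E₂.ncard + 1 := by
        grw [Set.ncard_union_le, Set.ncard_image_of_injective _ (glueVInl G₁ G₂ u v).injective,
          Set.ncard_image_of_injective _ (glueVInr G₁ G₂ u v).injective]
    _ = gammaSt G₁ + gammaSt G₂ + 1 := by rw [hc₁, hc₂]
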